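/- Let k ∈ ℕ and 1 ≤ j ≤ k. Then the average of χ_{Y_k} over the interval [0, 2^{m_j}] equals 2^{−j}; more generally, for every tuple (l_j, l_{j+1}, …, l_{k−1}) with 0 ≤ l_i ≤ 2^{m_{i+1} − m_i − 1} − 1, the average of χ_{Y_k} over the translated interval τ_{l_j·2^{m_j}} τ_{l_{j+1}·2^{m_{j+1}}} ⋯ τ_{l_{k−1}·2^{m_{k−1}}} [0, 2^{m_j}] equals 2^{−j}. The number of such translated intervals is 2^{m_k − m_j + j − k}. -/

import Mathlib

open MeasureTheory Set ENNReal

/-- The 1-periodic Rademacher function: `1` on `[0, 1/2)`, `-1` on `[1/2, 1)`,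
extended 1-periodically to `ℝ`. -/
noncomputable def rade (t : ℝ) : ℝ := if Int.fract t < 1 / 2 then 1 else -1

/-- `Yset m k = {t ∈ [0, 2^{m_k}] : ∑_{j=1}^{k} r₀(t / 2^{m_j}) = k}`. -/
def Yset (m : ℕ → ℕ) (k : ℕ) : Set ℝ :=
  {t | t ∈ Icc (0 : ℝ) (2 ^ m k) ∧ ∑ j ∈ Finset.Icc 1 k, rade (t / 2 ^ m j) = (k : ℝ)}

/-- The translate `τ_s E = {x : x - s ∈ E}`. -/
def tau (s : ℝ) (E : Set ℝ) : Set ℝ := {x | x - s ∈ E}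

/-- Tuples `(l_j, …, l_{k-1})` with `0 ≤ l_i ≤ 2^{m_{i+1} - m_i - 1} - 1`, encoded as
functions `ℕ → ℕ` vanishing outside `[j, k-1]`. -/
def tupleSet' (m : ℕ → ℕ) (j k : ℕ) : Set (ℕ → ℕ) :=
  {l | (∀ i, j ≤ i → i < k → l i < 2 ^ (m (i + 1) - m i - 1)) ∧
    ∀ i, i < j ∨ k ≤ i → l i = 0}

/-!
Write `G_j` for the set of `t` with `r₀(t / 2^{m_i}) = 1` for all `i ≤ j`, and
`S = ∑_{j ≤ i < k} l_i 2^{m_i}`. For `x ∈ [0, 2^{m_j})` the conditions with `i ≤ j` see `S + x`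
only through `x`, because `2^{m_i} ∣ S`; for `j < i ≤ k` they hold automatically, because modulo
`2^{m_i}` the point `S + x` reduces to `∑_{j ≤ i' < i} l_{i'} 2^{m_{i'}} + x`, which the bounds on
the `l_{i'}` keep below `2^{m_i - 1}`. So `Y_k ∩ (S + [0, 2^{m_j}])` is, up to a null set, a
translate of `G_j ∩ [0, 2^{m_j})`. The set `G_j` is `2^{m_j}`-periodic and
`G_{j+1} ∩ [0, 2^{m_{j+1}}) = G_j ∩ [0, 2^{m_{j+1} - 1})` consists of whole periods, so the density
halves at each step. The tuples are counted as a product of ranges.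
-/

lemma sum_rade_eq_card_iff {ι : Type*} (s : Finset ι) (f : ι → ℝ) :
    ∑ i ∈ s, rade (f i) = s.card ↔ ∀ i ∈ s, Int.fract (f i) < 1 / 2 := by
  have hle : ∀ i ∈ s, rade (f i) ≤ 1 := fun i _ ↦ by unfold rade; split_ifs <;> norm_num
  rw [← nsmul_one, ← Finset.sum_const, Finset.sum_eq_sum_iff_of_le hle]
  refine forall₂_congr fun i _ ↦ ?_
  unfold rade
  split_ifs with h <;> norm_num [h]

lemma fract_natCast_add_div_of_dvd {d N : ℕ} (h : d ∣ N) (t : ℝ) :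
    Int.fract ((N + t) / d) = Int.fract (t / d) := by
  obtain ⟨q, rfl⟩ := h
  rcases Nat.eq_zero_or_pos d with rfl | hd
  · simp
  · rw [show ((d * q : ℕ) + t) / (d : ℝ) = t / d + q by push_cast; field_simp; ring,
      Int.fract_add_natCast]

lemma fract_div_lt_half_iff {c t : ℝ} (h0 : 0 ≤ t) (h1 : t < c) :
    Int.fract (t / c) < 1 / 2 ↔ 2 * t < c := by
  have hc : 0 < c := h0.trans_lt h1
  rw [Int.fract_eq_self.2 ⟨div_nonneg h0 hc.le, (div_lt_one hc).2 h1⟩, div_lt_iff₀ hc]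
  constructor <;> intro h <;> linarith

lemma volume_inter_Ico_natCast_mul {E : Set ℝ} (hE : MeasurableSet E) {c : ℝ} (hc : 0 ≤ c)
    (hper : ∀ t, t + c ∈ E ↔ t ∈ E) (n : ℕ) :
    volume (E ∩ Ico 0 (n * c)) = n * volume (E ∩ Ico 0 c) := by
  induction n with
  | zero => simp
  | succ n ih =>
    have hshift : (fun x ↦ c + x) ⁻¹' (E ∩ Ico c (c + n * c)) = E ∩ Ico 0 (n * c) := by
      ext t
      simp [Set.preimage_const_add_Ico, add_comm c t, hper]
    have hsplit : Ico 0 ((n + 1 : ℕ) * c) = Ico 0 c ∪ Ico c (c + n * c) := by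
      rw [Ico_union_Ico_eq_Ico hc (by nlinarith [n.cast_nonneg (α := ℝ)])]
      push_cast
      ring_nf
    rw [hsplit, inter_union_distrib_left,
      measure_union (Ico_disjoint_Ico_same.mono inter_subset_right inter_subset_right)
        (hE.inter measurableSet_Ico),
      ← measure_preimage_add volume c (E ∩ Ico c _), hshift, ih]
    push_cast
    ring

/-- The points `t` with `r₀(t / 2^{m_i}) = 1` for all `1 ≤ i ≤ j`. -/
def fractLtHalfSet (m : ℕ → ℕ) (j : ℕ) : Set ℝ :=
  {t | ∀ i ∈ Finset.Icc 1 j, Int.fract (t / 2 ^ m i) < 1 / 2}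

lemma Yset_eq (m : ℕ → ℕ) (k : ℕ) : Yset m k = fractLtHalfSet m k ∩ Icc 0 (2 ^ m k) := by
  ext t
  simp only [Yset, fractLtHalfSet, mem_inter_iff, mem_ofPred_eq, and_comm]
  rw [← sum_rade_eq_card_iff, Nat.card_Icc, Nat.add_sub_cancel]

lemma measurableSet_fractLtHalfSet (m : ℕ → ℕ) (j : ℕ) :
    MeasurableSet (fractLtHalfSet m j) := by
  simp only [fractLtHalfSet, ofPred_forall]
  exact .biInter (Finset.countable_toSet _) fun i _ ↦
    measurableSet_lt (measurable_fract.comp (measurable_id.div_const _)) measurable_const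

lemma add_tsub_le_of_lt_succ {m : ℕ → ℕ} (hmono : ∀ i, 1 ≤ i → m i < m (i + 1)) {a b : ℕ}
    (ha : 1 ≤ a) (hab : a ≤ b) : m a + (b - a) ≤ m b := by
  induction b, hab using Nat.le_induction with
  | base => simp
  | succ b hab ih => have := hmono b (ha.trans hab); omega

lemma add_pow_mem_fractLtHalfSet_iff {m : ℕ → ℕ} (hmono : ∀ i, 1 ≤ i → m i < m (i + 1))
    (j : ℕ) (t : ℝ) : t + 2 ^ m j ∈ fractLtHalfSet m j ↔ t ∈ fractLtHalfSet m j := by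
  refine forall₂_congr fun i hi ↦ ?_
  obtain ⟨hi1, hij⟩ := Finset.mem_Icc.1 hi
  have hdvd : 2 ^ m i ∣ 2 ^ m j :=
    pow_dvd_pow 2 ((Nat.le_add_right _ _).trans (add_tsub_le_of_lt_succ hmono hi1 hij))
  have := fract_natCast_add_div_of_dvd hdvd t
  push_cast at this
  rw [add_comm, this]

lemma fractLtHalfSet_succ_inter_Ico (m : ℕ → ℕ) (j : ℕ) :
    fractLtHalfSet m (j + 1) ∩ Ico 0 (2 ^ m (j + 1)) =
      fractLtHalfSet m j ∩ Ico 0 (2 ^ m (j + 1) / 2) := by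
  ext t
  simp only [fractLtHalfSet, Finset.mem_Icc, mem_inter_iff, mem_ofPred_eq, mem_Ico]
  constructor
  · rintro ⟨hg, h0, h1⟩
    have := (fract_div_lt_half_iff h0 h1).1 (hg (j + 1) ⟨by omega, le_rfl⟩)
    exact ⟨fun i hi ↦ hg i ⟨hi.1, by omega⟩, h0, by linarith⟩
  · rintro ⟨hg, h0, h1⟩
    refine ⟨fun i hi ↦ ?_, h0, by linarith⟩
    rcases hi.2.lt_or_eq with h | rfl
    · exact hg i ⟨hi.1, by omega⟩
    · exact (fract_div_lt_half_iff h0 (by linarith)).2 (by linarith)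

lemma volume_fractLtHalfSet_inter_Ico {m : ℕ → ℕ} (hmono : ∀ i, 1 ≤ i → m i < m (i + 1))
    {j : ℕ} (hj : 1 ≤ j) :
    volume (fractLtHalfSet m j ∩ Ico 0 (2 ^ m j)) = 2 ^ m j / 2 ^ j := by
  induction j, hj using Nat.le_induction with
  | base =>
    have h0 : fractLtHalfSet m 0 = univ := by simp [fractLtHalfSet]
    rw [fractLtHalfSet_succ_inter_Ico, h0, univ_inter, Real.volume_Ico, sub_zero,
      ENNReal.ofReal_div_of_pos two_pos, ENNReal.ofReal_pow zero_le_two]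
    norm_num
  | succ j hj ih =>
    obtain ⟨n, hn⟩ : ∃ n, m (j + 1) = m j + n + 1 :=
      ⟨m (j + 1) - m j - 1, by have := hmono j hj; omega⟩
    have hlen : (2 : ℝ) ^ m (j + 1) / 2 = (2 ^ n : ℕ) * 2 ^ m j := by
      rw [hn]; push_cast; ring
    rw [fractLtHalfSet_succ_inter_Ico, hlen,
      volume_inter_Ico_natCast_mul (measurableSet_fractLtHalfSet m j) (by positivity)
        (add_pow_mem_fractLtHalfSet_iff hmono j), ih, hn, pow_succ, pow_succ,
      ENNReal.mul_div_mul_right _ _ two_ne_zero ofNat_ne_top]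
    push_cast
    rw [pow_add, mul_comm (2 ^ m j), mul_div_assoc]

/-- `∑_{j ≤ i < a} l_i 2^{m_i}`, the left end point of the translated interval. -/
def tupleShift (m l : ℕ → ℕ) (j a : ℕ) : ℕ := ∑ i ∈ Finset.Ico j a, l i * 2 ^ m i

section tupleShift

variable {m l : ℕ → ℕ} {j k : ℕ}

lemma pow_dvd_tupleShift (hmono : ∀ i, 1 ≤ i → m i < m (i + 1)) {i : ℕ} (hi : 1 ≤ i)
    (hij : i ≤ j) (a : ℕ) : 2 ^ m i ∣ tupleShift m l j a :=
  Finset.dvd_sum fun _ hi' ↦ Dvd.dvd.mul_left (pow_dvd_pow 2 ((Nat.le_add_right _ _).trans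
    (add_tsub_le_of_lt_succ hmono hi (hij.trans (Finset.mem_Ico.1 hi').1)))) _

lemma two_mul_tupleShift_succ_add_le {a : ℕ} (hja : j ≤ a) (hm : m a < m (a + 1))
    (hla : l a < 2 ^ (m (a + 1) - m a - 1)) (h : tupleShift m l j a + 2 ^ m j ≤ 2 ^ m a) :
    2 * (tupleShift m l j (a + 1) + 2 ^ m j) ≤ 2 ^ m (a + 1) := by
  obtain ⟨e, he⟩ : ∃ e, m (a + 1) = m a + e + 1 := ⟨m (a + 1) - m a - 1, by omega⟩
  rw [show m (a + 1) - m a - 1 = e by omega] at hla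
  calc 2 * (tupleShift m l j (a + 1) + 2 ^ m j)
      = 2 * (tupleShift m l j a + 2 ^ m j + l a * 2 ^ m a) := by
        simp only [tupleShift, Finset.sum_Ico_succ_top hja]; ring
    _ ≤ 2 * ((l a + 1) * 2 ^ m a) := by gcongr; linarith
    _ ≤ 2 * (2 ^ e * 2 ^ m a) := by gcongr; omega
    _ = 2 ^ m (a + 1) := by rw [he]; ring

lemma tupleShift_add_le (hmono : ∀ i, 1 ≤ i → m i < m (i + 1)) (hj : 1 ≤ j)
    (hl : l ∈ tupleSet' m j k) {a : ℕ} (hja : j ≤ a) (hak : a ≤ k) :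
    tupleShift m l j a + 2 ^ m j ≤ 2 ^ m a := by
  induction a, hja using Nat.le_induction with
  | base => simp [tupleShift]
  | succ a hja ih =>
    have := two_mul_tupleShift_succ_add_le hja (hmono a (hj.trans hja))
      (hl.1 a hja (by omega)) (ih (by omega))
    omega

lemma fract_tupleShift_add_div_of_le (hmono : ∀ i, 1 ≤ i → m i < m (i + 1)) {i : ℕ}
    (hi : 1 ≤ i) (hij : i ≤ j) (x : ℝ) :
    Int.fract ((tupleShift m l j k + x) / 2 ^ m i) = Int.fract (x / 2 ^ m i) := by
  have := fract_natCast_add_div_of_dvd (pow_dvd_tupleShift (l := l) hmono hi hij k) x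
  push_cast at this
  exact this

lemma fract_tupleShift_add_div_lt_half (hmono : ∀ i, 1 ≤ i → m i < m (i + 1)) (hj : 1 ≤ j)
    (hl : l ∈ tupleSet' m j k) {i : ℕ} (hji : j < i) (hik : i ≤ k) {x : ℝ} (hx0 : 0 ≤ x)
    (hx : x < 2 ^ m j) : Int.fract ((tupleShift m l j k + x) / 2 ^ m i) < 1 / 2 := by
  obtain ⟨i, rfl⟩ : ∃ i', i = i' + 1 := ⟨i - 1, by omega⟩
  have hsplit : tupleShift m l j k = tupleShift m l (i + 1) k + tupleShift m l j (i + 1) := by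
    unfold tupleShift
    rw [← Finset.sum_Ico_consecutive _ (show j ≤ i + 1 by omega) hik, add_comm]
  have hbound : 2 * (tupleShift m l j (i + 1) + 2 ^ m j) ≤ 2 ^ m (i + 1) :=
    two_mul_tupleShift_succ_add_le (by omega) (hmono i (by omega)) (hl.1 i (by omega) hik)
      (tupleShift_add_le hmono hj hl (by omega) (by omega))
  have hbound' : 2 * ((tupleShift m l j (i + 1) : ℝ) + 2 ^ m j) ≤ 2 ^ m (i + 1) := by
    exact_mod_cast hbound
  have hperiod := fract_natCast_add_div_of_dvd
    (pow_dvd_tupleShift (l := l) hmono (show 1 ≤ i + 1 by omega) le_rfl k)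
    (tupleShift m l j (i + 1) + x)
  push_cast at hperiod
  rw [hsplit, Nat.cast_add, add_assoc, hperiod,
    fract_div_lt_half_iff (by positivity) (by linarith)]
  linarith

lemma tupleShift_add_mem_Yset_iff (hmono : ∀ i, 1 ≤ i → m i < m (i + 1)) (hj : 1 ≤ j)
    (hjk : j ≤ k) (hl : l ∈ tupleSet' m j k) {x : ℝ} (hx0 : 0 ≤ x) (hx : x < 2 ^ m j) :
    (tupleShift m l j k : ℝ) + x ∈ Yset m k ↔ x ∈ fractLtHalfSet m j := by
  have hbound : ((tupleShift m l j k : ℕ) : ℝ) + 2 ^ m j ≤ 2 ^ m k := by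
    exact_mod_cast tupleShift_add_le hmono hj hl hjk le_rfl
  rw [Yset_eq]
  simp only [fractLtHalfSet, mem_inter_iff, mem_ofPred_eq, mem_Icc, Finset.mem_Icc]
  constructor
  · rintro ⟨hall, -⟩ i ⟨hi1, hij⟩
    rw [← fract_tupleShift_add_div_of_le hmono hi1 hij x]
    exact hall i ⟨hi1, hij.trans hjk⟩
  · intro hg
    refine ⟨fun i ⟨hi1, hik⟩ ↦ ?_, by positivity, by linarith⟩
    rcases le_or_gt i j with hij | hji
    · rw [fract_tupleShift_add_div_of_le hmono hi1 hij x]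
      exact hg i ⟨hi1, hij⟩
    · exact fract_tupleShift_add_div_lt_half hmono hj hl hji hik hx0 hx

lemma volume_Yset_inter_tau_tupleShift (hmono : ∀ i, 1 ≤ i → m i < m (i + 1)) (hj : 1 ≤ j)
    (hjk : j ≤ k) (hl : l ∈ tupleSet' m j k) :
    volume (Yset m k ∩ tau (tupleShift m l j k) (Icc 0 (2 ^ m j))) = 2 ^ m j / 2 ^ j := by
  set S : ℝ := (tupleShift m l j k : ℝ)
  have hpre : (fun x ↦ S + x) ⁻¹' Yset m k ∩ Ico 0 (2 ^ m j) =
      fractLtHalfSet m j ∩ Ico 0 (2 ^ m j) := by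
    ext x
    simp only [mem_inter_iff, mem_preimage, mem_Ico]
    exact ⟨fun ⟨hY, hx⟩ ↦ ⟨(tupleShift_add_mem_Yset_iff hmono hj hjk hl hx.1 hx.2).1 hY, hx⟩,
      fun ⟨hG, hx⟩ ↦ ⟨(tupleShift_add_mem_Yset_iff hmono hj hjk hl hx.1 hx.2).2 hG, hx⟩⟩
  calc volume (Yset m k ∩ tau S (Icc 0 (2 ^ m j)))
      = volume ((fun x ↦ S + x) ⁻¹' Yset m k ∩ Icc 0 (2 ^ m j)) := by
        rw [← measure_preimage_add volume S]
        congr 1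
        ext x
        simp only [tau, mem_inter_iff, mem_preimage, mem_ofPred_eq, add_sub_cancel_left]
    _ = volume ((fun x ↦ S + x) ⁻¹' Yset m k ∩ Ico 0 (2 ^ m j)) :=
        measure_congr ((ae_eq_refl _).inter Ico_ae_eq_Icc).symm
    _ = 2 ^ m j / 2 ^ j := by rw [hpre, volume_fractLtHalfSet_inter_Ico hmono hj]

end tupleShift

lemma volume_tau_Icc (s : ℝ) (n : ℕ) : volume (tau s (Icc 0 ((2 : ℝ) ^ n))) = 2 ^ n := by
  rw [show tau s (Icc 0 ((2 : ℝ) ^ n)) = (fun x ↦ x + -s) ⁻¹' Icc 0 (2 ^ n) from rfl,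
    measure_preimage_add_right, Real.volume_Icc, sub_zero, ENNReal.ofReal_pow zero_le_two]
  norm_num

lemma sum_Ico_tsub_tsub_one {m : ℕ → ℕ} (hmono : ∀ i, 1 ≤ i → m i < m (i + 1)) {j k : ℕ}
    (hj : 1 ≤ j) (hjk : j ≤ k) :
    ∑ i ∈ Finset.Ico j k, (m (i + 1) - m i - 1) = m k - m j - (k - j) := by
  induction k, hjk using Nat.le_induction with
  | base => simp
  | succ k hjk ih =>
    rw [Finset.sum_Ico_succ_top hjk, ih]
    have := add_tsub_le_of_lt_succ hmono hj hjk
    have := hmono k (hj.trans hjk)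
    omega

open Classical in
lemma tupleSet'_eq_image (m : ℕ → ℕ) (j k : ℕ) :
    tupleSet' m j k = ((Finset.Ico j k).pi fun i ↦ Finset.range (2 ^ (m (i + 1) - m i - 1))).image
      fun g i ↦ if h : i ∈ Finset.Ico j k then g i h else 0 := by
  ext l
  simp only [tupleSet', Finset.coe_image, mem_image, Finset.mem_coe, Finset.mem_pi,
    Finset.mem_range, Finset.mem_Ico, mem_ofPred_eq]
  constructor
  · rintro ⟨hlt, hzero⟩
    refine ⟨fun i _ ↦ l i, fun i hi ↦ hlt i hi.1 hi.2, funext fun i ↦ ?_⟩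
    split_ifs with hi
    · rfl
    · exact (hzero i (by omega)).symm
  · rintro ⟨g, hg, rfl⟩
    refine ⟨fun i hji hik ↦ ?_, fun i hi ↦ ?_⟩
    · simpa [hji, hik] using hg i ⟨hji, hik⟩
    · simp only [dif_neg (show ¬(j ≤ i ∧ i < k) by omega)]

lemma ncard_tupleSet' {m : ℕ → ℕ} (hmono : ∀ i, 1 ≤ i → m i < m (i + 1)) {j k : ℕ}
    (hj : 1 ≤ j) (hjk : j ≤ k) :
    (tupleSet' m j k).ncard = 2 ^ (m k - m j - (k - j)) := by
  classical
  have hinj : Function.Injective fun (g : ∀ i ∈ Finset.Ico j k, ℕ) i ↦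
      if h : i ∈ Finset.Ico j k then g i h else 0 := fun g g' h ↦
    funext₂ fun i hi ↦ by simpa [hi] using congrFun h i
  rw [tupleSet'_eq_image, Set.ncard_coe_finset, Finset.card_image_of_injective _ hinj,
    Finset.card_pi]
  simp only [Finset.card_range]
  rw [Finset.prod_pow_eq_pow_sum, sum_Ico_tsub_tsub_one hmono hj hjk]

/-- For `1 ≤ j ≤ k`, the average of `χ_{Y_k}` over `[0, 2^{m_j}]` equals `2^{-j}`, and more
generally the average of `χ_{Y_k}` over each translated interval
`τ_{l_j·2^{m_j}} ⋯ τ_{l_{k-1}·2^{m_{k-1}}} [0, 2^{m_j}]` (with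
`0 ≤ l_i ≤ 2^{m_{i+1}-m_i-1}-1`) equals `2^{-j}`; the number of such translated intervals
is `2^{m_k - m_j - (k - j)}`. -/
theorem statement9 (m : ℕ → ℕ) (hmono : ∀ i, 1 ≤ i → m i < m (i + 1)) (k j : ℕ)
    (hj : 1 ≤ j) (hjk : j ≤ k) :
    (volume (Yset m k ∩ Icc (0 : ℝ) (2 ^ m j)) / volume (Icc (0 : ℝ) (2 ^ m j)) =
      ((2 : ℝ≥0∞) ^ j)⁻¹) ∧
    (∀ l ∈ tupleSet' m j k,
      volume (Yset m k ∩
          tau (∑ i ∈ Finset.Ico j k, (l i : ℝ) * 2 ^ m i) (Icc (0 : ℝ) (2 ^ m j))) /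
        volume (tau (∑ i ∈ Finset.Ico j k, (l i : ℝ) * 2 ^ m i) (Icc (0 : ℝ) (2 ^ m j))) =
        ((2 : ℝ≥0∞) ^ j)⁻¹) ∧
    (tupleSet' m j k).ncard = 2 ^ (m k - m j - (k - j)) := by
  have haverage : ∀ l ∈ tupleSet' m j k,
      volume (Yset m k ∩ tau (tupleShift m l j k) (Icc (0 : ℝ) (2 ^ m j))) /
        volume (tau (tupleShift m l j k) (Icc (0 : ℝ) (2 ^ m j))) = ((2 : ℝ≥0∞) ^ j)⁻¹ := by
    intro l hl
    rw [volume_Yset_inter_tau_tupleShift hmono hj hjk hl, volume_tau_Icc]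
    exact ((ENNReal.eq_div_iff (by simp) (by simp)).2 (div_eq_mul_inv _ _).symm).symm
  have hzero : (fun _ ↦ 0) ∈ tupleSet' m j k := ⟨fun _ _ _ ↦ Nat.two_pow_pos _, fun _ _ ↦ rfl⟩
  refine ⟨?_, fun l hl ↦ ?_, ncard_tupleSet' hmono hj hjk⟩
  · have htau_zero : tau 0 (Icc (0 : ℝ) (2 ^ m j)) = Icc 0 (2 ^ m j) := by ext; simp [tau]
    simpa [tupleShift, htau_zero] using haverage _ hzero
  · simpa [tupleShift] using haverage l hl
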